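/- arXiv:math/9810199 — 2 statements merged into one kernel-verified Lean document; each statement's English description precedes it below -/
import Mathlib

section
/- Let λ > 0 be real, let τ = t + iθ with t, θ real, and let m be an integer. Then the imaginary part of tr(S(λ)^{−m} · T(λ,τ)) equals 2·sinh(t/2 + mλ)·sin(θ/2)·coth(λ); consequently tr(S(λ)^{−m} · T(λ,τ)) is real if and only if sinh(t/2 + mλ)·sin(θ/2) = 0, in which case if sin(θ/2) ≠ 0 then t = −2mλ and tr(S(λ)^{−m} · T(λ,τ)) = 2·cos(θ/2)·coth(λ). -/
open Matrix

/-- `S(λ) = [[cosh λ, cosh λ + 1], [cosh λ − 1, cosh λ]]` -/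
noncomputable def Smat (l : ℂ) : Matrix (Fin 2) (Fin 2) ℂ :=
  !![Complex.cosh l, Complex.cosh l + 1; Complex.cosh l - 1, Complex.cosh l]

/-- `T(λ,τ) = [[cosh(τ/2)·coth(λ/2), −sinh(τ/2)], [−sinh(τ/2), cosh(τ/2)·tanh(λ/2)]]` -/
noncomputable def Tmat (l τ : ℂ) : Matrix (Fin 2) (Fin 2) ℂ :=
  !![Complex.cosh (τ/2) * (Complex.cosh (l/2) / Complex.sinh (l/2)), -Complex.sinh (τ/2);
     -Complex.sinh (τ/2), Complex.cosh (τ/2) * (Complex.sinh (l/2) / Complex.cosh (l/2))]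

/-!
`S(λ) = cosh λ + sinh λ · J` with `J = [[0, (cosh λ + 1)/sinh λ], [(cosh λ − 1)/sinh λ, 0]]` and
`J² = 1`, so `S(λ)^n = cosh (nλ) + sinh (nλ) · J` lies on the one-parameter group
`x ↦ cosh x + sinh x · J`. Against `T(λ,τ)` this gives
`tr (S(λ)^n T(λ,τ)) = 2 coth λ · cosh (τ/2 − nλ)`, and for `n = −m`, `τ = t + iθ` the imaginary part
of `cosh (t/2 + mλ + iθ/2)` is `sinh (t/2 + mλ) sin (θ/2)`.
-/

open Complex

noncomputable def Sflow (l x : ℂ) : Matrix (Fin 2) (Fin 2) ℂ :=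
  !![cosh x, sinh x * (cosh l + 1) / sinh l;
     sinh x * (cosh l - 1) / sinh l, cosh x]

lemma Smat_det (l : ℂ) : (Smat l).det = 1 := by
  simp only [Smat, det_fin_two_of]
  ring

lemma Sflow_zero (l : ℂ) : Sflow l 0 = 1 := by
  ext i j
  fin_cases i <;> fin_cases j <;> simp [Sflow]

lemma Sflow_mul_Smat {l : ℂ} (hl : sinh l ≠ 0) (x : ℂ) :
    Sflow l x * Smat l = Sflow l (x + l) := by
  have hsq : cosh l ^ 2 - sinh l ^ 2 = 1 := cosh_sq_sub_sinh_sq l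
  ext i j
  fin_cases i <;> fin_cases j <;>
    simp [Sflow, Smat, mul_apply, Fin.sum_univ_two, cosh_add, sinh_add] <;>
    field_simp <;>
    first
      | ring1
      | linear_combination sinh x * hsq

lemma Smat_zpow {l : ℂ} (hl : sinh l ≠ 0) (n : ℤ) : Smat l ^ n = Sflow l (n * l) := by
  have hdet : IsUnit (Smat l).det := by simp [Smat_det]
  induction n using Int.induction_on with
  | zero => simp [Sflow_zero]
  | succ n ih =>
    rw [zpow_add_one hdet, ih, Sflow_mul_Smat hl]
    congr 1
    push_cast
    ring
  | pred n ih =>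
    have step : Sflow l ((-n - 1 : ℤ) * l) * Smat l = Smat l ^ (-n : ℤ) := by
      rw [ih, Sflow_mul_Smat hl]
      congr 1
      push_cast
      ring
    rw [zpow_sub_one hdet, ← step, Matrix.mul_assoc, mul_nonsing_inv _ hdet, Matrix.mul_one]

lemma trace_Sflow_mul_Tmat {l : ℂ} (hl : sinh l ≠ 0) (x τ : ℂ) :
    (Sflow l x * Tmat l τ).trace = 2 * (cosh l / sinh l) * cosh (τ/2 - x) := by
  have hl2 : 2 * sinh (l/2) * cosh (l/2) ≠ 0 := by
    rwa [← sinh_two_mul, mul_div_cancel₀ _ two_ne_zero]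
  have hsinh : sinh l = 2 * sinh (l/2) * cosh (l/2) := by
    rw [← sinh_two_mul, mul_div_cancel₀ _ two_ne_zero]
  have hcosh : cosh l = cosh (l/2) ^ 2 + sinh (l/2) ^ 2 := by
    rw [← cosh_two_mul, mul_div_cancel₀ _ two_ne_zero]
  simp only [trace_fin_two, mul_apply, Fin.sum_univ_two, Sflow, Tmat, of_apply, cons_val',
    cons_val_zero, cons_val_one, empty_val', cons_val_fin_one]
  rw [cosh_sub, hcosh, hsinh]
  field_simp
  ring

lemma cosh_add_mul_I_ofReal (a b : ℝ) :
    cosh (a + b * I) = (Real.cosh a * Real.cos b : ℝ) + (Real.sinh a * Real.sin b : ℝ) * I := by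
  rw [cosh_add, cosh_mul_I, sinh_mul_I]
  push_cast
  ring

lemma trace_Smat_zpow_neg_mul_Tmat (l t θ : ℝ) (hl : Real.sinh l ≠ 0) (m : ℤ) :
    (Smat l ^ (-m) * Tmat l (t + θ * I)).trace =
      (2 * (Real.cosh l / Real.sinh l) * (Real.cosh (t/2 + m * l) * Real.cos (θ/2)) : ℝ) +
      (2 * (Real.cosh l / Real.sinh l) * (Real.sinh (t/2 + m * l) * Real.sin (θ/2)) : ℝ) * I := by
  have hl' : sinh (l : ℂ) ≠ 0 := by exact_mod_cast hl
  rw [Smat_zpow hl', trace_Sflow_mul_Tmat hl',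
    show (t + θ * I) / 2 - (-m : ℤ) * l = (t/2 + m * l : ℝ) + (θ/2 : ℝ) * I by push_cast; ring,
    cosh_add_mul_I_ofReal]
  push_cast
  ring

theorem real_trace_condition (l t θ : ℝ) (hl : 0 < l) (m : ℤ) :
    ((Smat l ^ (-m) * Tmat l ((t : ℂ) + θ * Complex.I)).trace).im =
      2 * Real.sinh (t/2 + m * l) * Real.sin (θ/2) * (Real.cosh l / Real.sinh l) ∧
    (((Smat l ^ (-m) * Tmat l ((t : ℂ) + θ * Complex.I)).trace).im = 0 ↔
      Real.sinh (t/2 + m * l) * Real.sin (θ/2) = 0) ∧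
    (((Smat l ^ (-m) * Tmat l ((t : ℂ) + θ * Complex.I)).trace).im = 0 →
      Real.sin (θ/2) ≠ 0 →
      t = -2 * m * l ∧
        (Smat l ^ (-m) * Tmat l ((t : ℂ) + θ * Complex.I)).trace =
          ((2 * Real.cos (θ/2) * (Real.cosh l / Real.sinh l) : ℝ) : ℂ)) := by
  have hsinh : 0 < Real.sinh l := Real.sinh_pos_iff.mpr hl
  have hcoth : Real.cosh l / Real.sinh l ≠ 0 := (div_pos (Real.cosh_pos l) hsinh).ne'
  have htr := trace_Smat_zpow_neg_mul_Tmat l t θ hsinh.ne' m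
  have him : (Smat l ^ (-m) * Tmat l (t + θ * I)).trace.im =
      Real.sinh (t/2 + m * l) * Real.sin (θ/2) * (2 * (Real.cosh l / Real.sinh l)) := by
    rw [htr]
    simp only [add_im, ofReal_im, mul_im, ofReal_re, I_re, I_im]
    ring
  have him_zero : (Smat l ^ (-m) * Tmat l (t + θ * I)).trace.im = 0 ↔
      Real.sinh (t/2 + m * l) * Real.sin (θ/2) = 0 := by
    rw [him, mul_eq_zero, or_iff_left (mul_ne_zero two_ne_zero hcoth)]
  refine ⟨by rw [him]; ring, him_zero, fun h hsin => ?_⟩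
  have ha : t/2 + m * l = 0 :=
    Real.sinh_eq_zero.mp ((mul_eq_zero.mp (him_zero.mp h)).resolve_right hsin)
  refine ⟨by linarith, ?_⟩
  rw [htr, ha]
  simp only [Real.sinh_zero, Real.cosh_zero, zero_mul, mul_zero, ofReal_zero, add_zero]
  push_cast
  ring
end

section
/- Let λ, τ ∈ ℂ with sinh(λ/2) ≠ 0 and cosh(λ/2) ≠ 0, and define u(ξ) = (ξ·sinh(λ/2) + cosh(λ/2))/(−ξ·sinh(λ/2) + cosh(λ/2)) and v(ξ) = (ξ·cosh(λ/2) − sinh(λ/2))/(ξ·cosh(λ/2) + sinh(λ/2)). Then for every ζ ∈ ℂ for which all the relevant denominators are nonzero (namely the denominator of the Möbius action T(λ,τ)·ζ, the denominator of u at T(λ,τ)·ζ, and ζ·cosh(λ/2) + sinh(λ/2)), one has u(T(λ,τ)·ζ) · v(ζ) = −e^{−τ}. -/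
open Matrix

/-- The Möbius action of a 2×2 matrix on ℂ. -/
noncomputable def moebius (M : Matrix (Fin 2) (Fin 2) ℂ) (z : ℂ) : ℂ :=
  (M 0 0 * z + M 0 1) / (M 1 0 * z + M 1 1)

/-- `u(ξ) = (ξ·sinh(λ/2) + cosh(λ/2))/(−ξ·sinh(λ/2) + cosh(λ/2))` -/
noncomputable def uCoord (l ξ : ℂ) : ℂ :=
  (ξ * Complex.sinh (l/2) + Complex.cosh (l/2)) /
    (-ξ * Complex.sinh (l/2) + Complex.cosh (l/2))

/-- `v(ξ) = (ξ·cosh(λ/2) − sinh(λ/2))/(ξ·cosh(λ/2) + sinh(λ/2))` -/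
noncomputable def vCoord (l ξ : ℂ) : ℂ :=
  (ξ * Complex.cosh (l/2) - Complex.sinh (l/2)) /
    (ξ * Complex.cosh (l/2) + Complex.sinh (l/2))

/-! Write `s, c = sinh, cosh (λ/2)` and `S, C = sinh, cosh (τ/2)`. Clearing `coth` and `tanh`,
`T·ζ = c (C c ζ - S s) / (s (C s - S c ζ))`; substituted into `u`, numerator and denominator
factor as `c (C - S) (c ζ + s)` and `-c (C + S) (c ζ - s)` over the common denominator
`C s - S c ζ`. Hence `u(T·ζ) · v(ζ) = -(C - S)/(C + S) = -e^{-τ/2}/e^{τ/2}`. -/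

open Complex

theorem exp_neg_eq_cosh_sub_sinh_div_cosh_add_sinh (x : ℂ) :
    exp (-x) = (cosh (x/2) - sinh (x/2)) / (cosh (x/2) + sinh (x/2)) := by
  rw [cosh_sub_sinh, cosh_add_sinh, ← exp_sub]
  ring_nf

section Plumbing

variable {l τ ζ : ℂ}

theorem Tmat_one_zero_mul_add_one_one (hc : cosh (l/2) ≠ 0) :
    Tmat l τ 1 0 * ζ + Tmat l τ 1 1 =
      (cosh (τ/2) * sinh (l/2) - sinh (τ/2) * cosh (l/2) * ζ) / cosh (l/2) := by
  simp only [Tmat, of_apply, cons_val', cons_val_zero, cons_val_one, empty_val',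
    cons_val_fin_one]
  field_simp
  ring

theorem moebius_Tmat (hs : sinh (l/2) ≠ 0) (hc : cosh (l/2) ≠ 0) :
    moebius (Tmat l τ) ζ =
      cosh (l/2) * (cosh (τ/2) * cosh (l/2) * ζ - sinh (τ/2) * sinh (l/2)) /
        (sinh (l/2) * (cosh (τ/2) * sinh (l/2) - sinh (τ/2) * cosh (l/2) * ζ)) := by
  simp only [moebius, Tmat, of_apply, cons_val', cons_val_zero, cons_val_one, empty_val',
    cons_val_fin_one]
  rw [← mul_div_mul_left _ _ (mul_ne_zero hs hc)]
  congr 1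
  · field_simp
    ring
  · field_simp
    ring

theorem moebius_Tmat_mul_sinh_add_cosh (hs : sinh (l/2) ≠ 0) (hc : cosh (l/2) ≠ 0)
    (hden : cosh (τ/2) * sinh (l/2) - sinh (τ/2) * cosh (l/2) * ζ ≠ 0) :
    moebius (Tmat l τ) ζ * sinh (l/2) + cosh (l/2) =
      cosh (l/2) * (cosh (τ/2) - sinh (τ/2)) * (ζ * cosh (l/2) + sinh (l/2)) /
        (cosh (τ/2) * sinh (l/2) - sinh (τ/2) * cosh (l/2) * ζ) := by
  rw [moebius_Tmat hs hc, div_mul_eq_mul_div, mul_comm (sinh (l/2)) (_ - _),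
    mul_div_mul_right _ _ hs, div_add' _ _ _ hden]
  ring

theorem neg_moebius_Tmat_mul_sinh_add_cosh (hs : sinh (l/2) ≠ 0) (hc : cosh (l/2) ≠ 0)
    (hden : cosh (τ/2) * sinh (l/2) - sinh (τ/2) * cosh (l/2) * ζ ≠ 0) :
    -moebius (Tmat l τ) ζ * sinh (l/2) + cosh (l/2) =
      -(cosh (l/2) * (cosh (τ/2) + sinh (τ/2)) * (ζ * cosh (l/2) - sinh (l/2))) /
        (cosh (τ/2) * sinh (l/2) - sinh (τ/2) * cosh (l/2) * ζ) := by
  rw [moebius_Tmat hs hc, neg_mul, div_mul_eq_mul_div, mul_comm (sinh (l/2)) (_ - _),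
    mul_div_mul_right _ _ hs, neg_add_eq_sub, sub_div' hden]
  ring

end Plumbing

theorem plumbing_identity (l τ ζ : ℂ) (h1 : Complex.sinh (l/2) ≠ 0)
    (h2 : Complex.cosh (l/2) ≠ 0)
    (hden1 : Tmat l τ 1 0 * ζ + Tmat l τ 1 1 ≠ 0)
    (hden2 : -(moebius (Tmat l τ) ζ) * Complex.sinh (l/2) + Complex.cosh (l/2) ≠ 0)
    (hden3 : ζ * Complex.cosh (l/2) + Complex.sinh (l/2) ≠ 0) :
    uCoord l (moebius (Tmat l τ) ζ) * vCoord l ζ = -Complex.exp (-τ) := by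
  rw [Tmat_one_zero_mul_add_one_one h2, div_ne_zero_iff] at hden1
  have hD := hden1.1
  rw [neg_moebius_Tmat_mul_sinh_add_cosh h1 h2 hD, div_ne_zero_iff, neg_ne_zero] at hden2
  have hexp : cosh (τ/2) + sinh (τ/2) ≠ 0 := cosh_add_sinh (τ/2) ▸ exp_ne_zero _
  rw [uCoord, vCoord, moebius_Tmat_mul_sinh_add_cosh h1 h2 hD,
    neg_moebius_Tmat_mul_sinh_add_cosh h1 h2 hD, div_div_div_cancel_right₀ hD,
    exp_neg_eq_cosh_sub_sinh_div_cosh_add_sinh, div_mul_div_comm, ← neg_div,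
    div_eq_div_iff (mul_ne_zero (neg_ne_zero.mpr hden2.1) hden3) hexp]
  ring
end
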